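/- (Claim I) For vectors a, b in {0,1}^d with d >= 1, the vectors a and b are orthogonal if and only if psi_B(b) is a subsequence of psi_A(a). -/

import Mathlib

open List

/-- The alphabet {0, 1, #}. -/
inductive Letter3 : Type
  | zero : Letter3
  | one : Letter3
  | hash : Letter3
deriving DecidableEq

/-- The letter of `Letter3` corresponding to a Boolean value. -/
def lit : Bool → Letter3
  | false => .zero
  | true => .one

/-- `psi_A(0) = 01#`, `psi_A(1) = 00#`. -/
def psiA : Bool → List Letter3
  | false => [.zero, .one, .hash]
  | true => [.zero, .zero, .hash]

/-- `psi_B(y) = y#`. -/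
def psiB (y : Bool) : List Letter3 := [lit y, .hash]

/-- `psi_A` applied letterwise to a vector in `{0,1}^d`. -/
def psiAvec {d : ℕ} (v : Fin d → Bool) : List Letter3 :=
  (List.ofFn (fun k => psiA (v k))).flatten

/-- `psi_B` applied letterwise to a vector in `{0,1}^d`. -/
def psiBvec {d : ℕ} (v : Fin d → Bool) : List Letter3 :=
  (List.ofFn (fun k => psiB (v k))).flatten

/-!
Both words contain exactly `d` letters `#`, one closing each block. In an embedding of
`psi_B(b)` into `psi_A(a)`, the `#` closing the first block `b₁#` must therefore be mapped to
the `#` closing `psi_A(a₁)`, since any later one leaves too few `#`s for the remaining blocks.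
Induction on `d` thus reduces the claim to one block: `b₁#` embeds into `psi_A(a₁)` iff
`a₁ b₁ = 0`.
-/

theorem List.append_cons_sublist_append_cons_iff {α : Type*} [DecidableEq α]
    {u v r₁ r₂ : List α} {c : α} (hv : c ∉ v) (hr : r₂.count c ≤ r₁.count c) :
    u ++ c :: r₁ <+ v ++ c :: r₂ ↔ u <+ v ∧ r₁ <+ r₂ := by
  refine ⟨fun h => ?_, fun ⟨hu, hr⟩ => hu.append (cons_sublist_cons.mpr hr)⟩
  have not_sublist (w : List α) : ¬ w ++ c :: r₁ <+ r₂ := fun hw => by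
    have := hw.count_le c
    simp only [count_append, count_cons_self] at this
    omega
  obtain ⟨l₁, l₂, heq, h₁, h₂⟩ := sublist_append_iff.mp h
  rcases append_eq_append_iff.mp heq with ⟨_ | ⟨x, w⟩, rfl, hl₂⟩ | ⟨_ | ⟨x, w⟩, rfl, rfl⟩
  · obtain rfl : l₂ = c :: r₁ := hl₂.symm
    exact ⟨by simpa using h₁, cons_sublist_cons.mp h₂⟩
  · obtain ⟨rfl, -⟩ := cons_eq_cons.mp hl₂
    exact absurd (h₁.subset (by simp)) hv
  · exact ⟨by simpa using h₁, cons_sublist_cons.mp h₂⟩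
  · rcases sublist_cons_iff.mp h₂ with h₂ | ⟨_, heq', h₂⟩
    · exact (not_sublist (x :: w) h₂).elim
    · obtain ⟨-, rfl⟩ := cons_eq_cons.mp heq'
      exact (not_sublist w h₂).elim

theorem psiA_eq_append (x : Bool) : psiA x = [.zero, lit !x] ++ [.hash] := by
  cases x <;> rfl

theorem singleton_lit_sublist_iff (x y : Bool) :
    [lit y] <+ [.zero, lit !x] ↔ (x && y) = false := by
  cases x <;> cases y <;> decide

theorem count_hash_psiA (x : Bool) : (psiA x).count .hash = 1 := by
  cases x <;> rfl

theorem count_hash_psiB (y : Bool) : (psiB y).count .hash = 1 := by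
  cases y <;> rfl

theorem count_hash_psiAvec {d : ℕ} (a : Fin d → Bool) : (psiAvec a).count .hash = d := by
  simp [psiAvec, count_flatten, Function.comp_def, count_hash_psiA]

theorem count_hash_psiBvec {d : ℕ} (b : Fin d → Bool) : (psiBvec b).count .hash = d := by
  simp [psiBvec, count_flatten, Function.comp_def, count_hash_psiB]

theorem psiAvec_succ {d : ℕ} (a : Fin (d + 1) → Bool) :
    psiAvec a = psiA (a 0) ++ psiAvec (Fin.tail a) := by
  simp [psiAvec, ofFn_succ, Fin.tail]

theorem psiBvec_succ {d : ℕ} (b : Fin (d + 1) → Bool) :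
    psiBvec b = psiB (b 0) ++ psiBvec (Fin.tail b) := by
  simp [psiBvec, ofFn_succ, Fin.tail]

theorem psiB_append_sublist_psiA_append_iff (x y : Bool) {r₁ r₂ : List Letter3}
    (hr : r₂.count .hash ≤ r₁.count .hash) :
    psiB y ++ r₁ <+ psiA x ++ r₂ ↔ (x && y) = false ∧ r₁ <+ r₂ := by
  rw [psiA_eq_append, append_assoc, singleton_append, ← singleton_lit_sublist_iff]
  exact append_cons_sublist_append_cons_iff (u := [lit y]) (by cases x <;> decide) hr

theorem orthogonal_iff_psiBvec_sublist_psiAvec_general {d : ℕ}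
    (a b : Fin d → Bool) :
    (∀ k, (a k && b k) = false) ↔ psiBvec b <+ psiAvec a := by
  induction d with
  | zero => simp [psiAvec, psiBvec]
  | succ d ih =>
    have hr : (psiAvec (Fin.tail a)).count .hash ≤ (psiBvec (Fin.tail b)).count .hash := by
      rw [count_hash_psiAvec, count_hash_psiBvec]
    rw [Fin.forall_fin_succ, psiAvec_succ, psiBvec_succ,
      psiB_append_sublist_psiA_append_iff _ _ hr, ← ih]
    rfl

/-- (Claim I) Vectors `a, b ∈ {0,1}^d` are orthogonal iff
`psi_B(b)` is a subsequence of `psi_A(a)`. -/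
theorem orthogonal_iff_psiBvec_sublist_psiAvec {d : ℕ} (hd : 1 ≤ d)
    (a b : Fin d → Bool) :
    (∀ k, (a k && b k) = false) ↔ psiBvec b <+ psiAvec a :=
  orthogonal_iff_psiBvec_sublist_psiAvec_general a b
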